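/- arXiv:0906.0541 — 6 statements merged into one kernel-verified Lean document; each statement's English description precedes it below -/
import Mathlib

section
/- If T is a tree and x is a leaf vertex of T, then for any odd positive integer k, the k-th bipartite power of T minus x equals the k-th bipartite power of (T minus x), i.e., (T - {x})^[k] = T^[k] - {x}. -/
open SimpleGraph Set

/-- `f` given by endpoint functions `a`, `b` is an interval representation of `I`. -/
def IsIntervalRep {V : Type*} (I : SimpleGraph V) (a b : V → ℝ) : Prop :=
  (∀ v, a v ≤ b v) ∧
    ∀ u v, I.Adj u v ↔ u ≠ v ∧ (Set.Icc (a u) (b u) ∩ Set.Icc (a v) (b v)).Nonempty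

/-- `I` is an interval graph. -/
def IsIntervalGraph {V : Type*} (I : SimpleGraph V) : Prop :=
  ∃ a b : V → ℝ, IsIntervalRep I a b

/-- `G` is the intersection graph of axis-parallel `k`-dimensional boxes. -/
def IsBoxRep {V : Type*} (G : SimpleGraph V) (k : ℕ) : Prop :=
  ∃ lo hi : V → Fin k → ℝ, (∀ v i, lo v i ≤ hi v i) ∧
    ∀ u v, G.Adj u v ↔ u ≠ v ∧
      ∀ i, (Set.Icc (lo u i) (hi u i) ∩ Set.Icc (lo v i) (hi v i)).Nonempty

/-- The boxicity of a graph: the least `k` such that `G` is an intersection graph of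
axis-parallel `k`-dimensional boxes. -/
noncomputable def boxicity {V : Type*} (G : SimpleGraph V) : ℕ :=
  sInf {k | IsBoxRep G k}

/-- The `k`-th bipartite power of `G`: join vertices at odd distance at most `k`. -/
def bipartitePower {V : Type*} (G : SimpleGraph V) (k : ℕ) : SimpleGraph V :=
  SimpleGraph.fromRel (fun u v => Odd (G.dist u v) ∧ G.dist u v ≤ k)

/-- Add to `G` all edges between distinct vertices of `B`. -/
def addCliqueOn {V : Type*} (G : SimpleGraph V) (B : Set V) : SimpleGraph V :=
  SimpleGraph.fromRel (fun u v => G.Adj u v ∨ (u ∈ B ∧ v ∈ B))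

/-- `{A, B}` is a bipartition of `G`. -/
def IsBipartitionOf {V : Type*} (G : SimpleGraph V) (A B : Set V) : Prop :=
  Disjoint A B ∧ A ∪ B = Set.univ ∧ ∀ u v, G.Adj u v → (u ∈ A ↔ v ∈ B)

/-- `G` has no induced cycle of length greater than `m`. -/
def HasNoInducedCycleGT {V : Type*} (G : SimpleGraph V) (m : ℕ) : Prop :=
  ∀ n : ℕ, m < n → IsEmpty (SimpleGraph.cycleGraph n ↪g G)

/-- Chordal bipartite graphs: bipartite with no induced cycle of length > 4. -/
def ChordalBipartite {V : Type*} (G : SimpleGraph V) : Prop :=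
  (∃ A B : Set V, IsBipartitionOf G A B) ∧ HasNoInducedCycleGT G 4

/-- The closed neighbourhood `N[v]`. -/
def closedNbhd {V : Type*} (G : SimpleGraph V) (v : V) : Set V :=
  insert v (G.neighborSet v)

/-- Two vertices are compatible if one closed neighbourhood contains the other. -/
def Compatible {V : Type*} (G : SimpleGraph V) (u v : V) : Prop :=
  closedNbhd G u ⊆ closedNbhd G v ∨ closedNbhd G v ⊆ closedNbhd G u

/-- A vertex is simple if all pairs in its closed neighbourhood are compatible. -/
def IsSimpleVertex {V : Type*} (G : SimpleGraph V) (v : V) : Prop :=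
  ∀ x ∈ closedNbhd G v, ∀ y ∈ closedNbhd G v, Compatible G x y

/-!
A vertex with at most one neighbour is never an inner vertex of a path, so every shortest path
between two other vertices avoids it and deleting it preserves all their distances. The bipartite
power only depends on distances, hence commutes with deleting such a vertex.
-/

namespace SimpleGraph

variable {V : Type*} {G : SimpleGraph V}

-- An inner vertex `p.getVert i` of a path has the two distinct neighbours `p.getVert (i ± 1)`.
lemma Walk.IsPath.notMem_support_of_neighborSet_subsingleton {u v x : V} {p : G.Walk u v}
    (hp : p.IsPath) (hx : (G.neighborSet x).Subsingleton) (hu : u ≠ x) (hv : v ≠ x) :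
    x ∉ p.support := by
  intro hmem
  obtain ⟨i, rfl, hi⟩ := Walk.mem_support_iff_exists_getVert.mp hmem
  have hi0 : i ≠ 0 := by rintro rfl; exact hu p.getVert_zero.symm
  have hil : i ≠ p.length := by rintro rfl; exact hv p.getVert_length.symm
  have hpred : G.Adj (p.getVert i) (p.getVert (i - 1)) := by
    simpa [Nat.sub_add_cancel (Nat.pos_of_ne_zero hi0)] using
      (p.adj_getVert_succ (i := i - 1) (by omega)).symm
  have hsucc : G.Adj (p.getVert i) (p.getVert (i + 1)) := p.adj_getVert_succ (by omega)
  have := hp.getVert_injOn (by simp only [Set.mem_ofPred_eq]; omega)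
    (by simp only [Set.mem_ofPred_eq]; omega) (hx hpred hsucc)
  omega

lemma dist_induce_eq_of_forall_isPath {s : Set V} {u v : V} (hu : u ∈ s) (hv : v ∈ s)
    (hs : ∀ p : G.Walk u v, p.IsPath → ∀ w ∈ p.support, w ∈ s) :
    (G.induce s).dist ⟨u, hu⟩ ⟨v, hv⟩ = G.dist u v := by
  by_cases hr : G.Reachable u v
  · obtain ⟨p, hp, hpdist⟩ := hr.exists_path_of_dist
    have hind : (G.induce s).Reachable ⟨u, hu⟩ ⟨v, hv⟩ := ⟨p.induce s (hs p hp)⟩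
    obtain ⟨q, hqdist⟩ := hind.exists_walk_length_eq_dist
    refine le_antisymm ?_ ?_
    · calc (G.induce s).dist ⟨u, hu⟩ ⟨v, hv⟩ ≤ (p.induce s (hs p hp)).length := dist_le _
        _ = G.dist u v := by
          rw [← Walk.length_map (Embedding.induce s).toHom, Walk.map_induce]; exact hpdist
    · calc G.dist u v ≤ (q.map (Embedding.induce s).toHom).length := dist_le _
        _ = (G.induce s).dist ⟨u, hu⟩ ⟨v, hv⟩ := by rw [Walk.length_map, hqdist]
  · have hind : ¬(G.induce s).Reachable ⟨u, hu⟩ ⟨v, hv⟩ :=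
      fun h => hr (h.map (Embedding.induce s).toHom)
    rw [dist_eq_zero_of_not_reachable hr, dist_eq_zero_of_not_reachable hind]

lemma dist_induce_ne_of_neighborSet_subsingleton {x : V} (hx : (G.neighborSet x).Subsingleton) (u v : {y | y ≠ x}) :
    (G.induce {y | y ≠ x}).dist u v = G.dist u v :=
  dist_induce_eq_of_forall_isPath u.2 v.2 fun _ hp _ hw hwx =>
    hp.notMem_support_of_neighborSet_subsingleton hx u.2 v.2 (hwx ▸ hw)

lemma bipartitePower_induce_of_dist_eq {s : Set V}
    (hs : ∀ u v : s, (G.induce s).dist u v = G.dist u v) (k : ℕ) :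
    bipartitePower (G.induce s) k = (bipartitePower G k).induce s := by
  ext u v
  simp only [bipartitePower, fromRel_adj, comap_adj, Function.Embedding.coe_subtype, hs,
    ne_eq, Subtype.ext_iff]

end SimpleGraph

theorem stmt0_general {V : Type*} (T : SimpleGraph V) (x : V)
    (hleaf : ∃! y, T.Adj x y) (k : ℕ) :
    bipartitePower (T.induce {y | y ≠ x}) k
      = (bipartitePower T k).induce {y | y ≠ x} :=
  bipartitePower_induce_of_dist_eq
    (dist_induce_ne_of_neighborSet_subsingleton fun _ ha _ hb => hleaf.unique ha hb) k

theorem stmt0 {V : Type*} (T : SimpleGraph V) (hT : T.IsTree) (x : V)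
    (hleaf : ∃! y, T.Adj x y) (k : ℕ) (hk : Odd k) (hk0 : 0 < k) :
    bipartitePower (T.induce {y | y ≠ x}) k
      = (bipartitePower T k).induce {y | y ≠ x} :=
  stmt0_general T x hleaf k
end

section
/- Let T be a tree rooted at r with bipartition {A,B}, and let x ∈ A be a vertex at maximum distance from r in T. For any odd positive integer k, x is a simple vertex in the split graph C_B(T^[k]) obtained from T^[k] by adding all edges between pairs of vertices of B. -/
open SimpleGraph Set

/-!
All neighbours of `x` lie in the clique `B`, so `N[x] ⊆ N[v]` for every neighbour `v` of `x`,
and it remains to see that the closed neighbourhoods of the neighbours of `x` are nested. For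
`u ∈ B` the closed neighbourhood is `B` together with the vertices of `A` within distance `k`
of `u`. These balls, for centres within distance `k` of `x`, are ordered by the distance of the
centre from `r`: this is a consequence of the four-point condition for the tree metric, applied
with `x` being farthest from `r`. The four-point condition itself follows by induction along a
geodesic, using that in a tree each vertex has a unique neighbour closer to a given vertex.
-/

namespace SimpleGraph

variable {V : Type*} {G T : SimpleGraph V}

theorem Reachable.exists_adj_dist_add_one {x c : V} (hr : G.Reachable x c) (hne : x ≠ c) :
    ∃ y, G.Adj x y ∧ G.dist c y + 1 = G.dist c x := by
  obtain ⟨p, hp⟩ := hr.exists_walk_length_eq_dist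
  cases p with
  | nil => exact absurd rfl hne
  | @cons _ y _ hxy q =>
    refine ⟨y, hxy, ?_⟩
    have hyc : G.dist y c ≤ q.length := dist_le q
    have hxc : G.dist x c ≤ G.dist x y + G.dist y c := hxy.reachable.dist_triangle_left c
    rw [dist_eq_one_iff_adj.mpr hxy, Walk.length_cons] at *
    grind [dist_comm]

namespace IsTree

variable (hT : T.IsTree)
include hT

theorem eq_of_adj_of_dist_add_one {x y z c : V} (hxy : T.Adj x y) (hxz : T.Adj x z)
    (hy : T.dist c y + 1 = T.dist c x) (hz : T.dist c z + 1 = T.dist c x) : y = z := by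
  obtain ⟨p, hp⟩ := (hT.connected y c).exists_walk_length_eq_dist
  obtain ⟨q, hq⟩ := (hT.connected z c).exists_walk_length_eq_dist
  have hpath (w : T.Walk x c) (hw : w.length = T.dist c x) : w.IsPath :=
    w.isPath_of_length_eq_dist (hw.trans dist_comm)
  have hpq : (⟨_, hpath (.cons hxy p) (by grind [Walk.length_cons, dist_comm])⟩ : T.Path x c) =
      ⟨_, hpath (.cons hxz q) (by grind [Walk.length_cons, dist_comm])⟩ :=
    (hT.isAcyclic.subsingleton_path x c).elim _ _
  simpa using congrArg (fun w : T.Path x c => w.val.snd) hpq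

/-- If the step from `x` towards `c` moves away from `a`, then `x` lies on the geodesic from
`a` to `c`. -/
theorem dist_eq_dist_add_dist_of_adj {x y a c : V} (hxy : T.Adj x y)
    (hyc : T.dist c y + 1 = T.dist c x) (hya : T.dist a y = T.dist a x + 1) :
    T.dist a c = T.dist a x + T.dist x c := by
  induction hn : T.dist c y generalizing x y with
  | zero =>
    obtain rfl : c = y := (hT.connected c y).dist_eq_zero_iff.mp hn
    grind [dist_comm]
  | succ n ih =>
    obtain ⟨z, hyz, hzc⟩ := (hT.connected y c).exists_adj_dist_add_one
      (by rintro rfl; simp at hn)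
    have hza : T.dist a z = T.dist a y + 1 := by
      refine (hT.dist_eq_dist_add_one_of_adj a hyz).resolve_left fun hza => ?_
      obtain rfl : z = x := hT.eq_of_adj_of_dist_add_one hyz hxy.symm hza.symm hya.symm
      omega
    have := ih hyz hzc hza (by omega)
    grind [dist_comm]

/-- The four-point condition: trees are `0`-hyperbolic. -/
theorem dist_add_dist_le_max (x a b c : V) :
    T.dist a b + T.dist x c ≤ max (T.dist a c + T.dist x b) (T.dist b c + T.dist x a) := by
  have hconn := hT.connected
  induction hn : T.dist c x generalizing x with
  | zero =>
    obtain rfl : c = x := (hconn c x).dist_eq_zero_iff.mp hn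
    have : T.dist a b ≤ T.dist a c + T.dist c b := hconn.dist_triangle
    grind [dist_comm]
  | succ n ih =>
    obtain ⟨y, hxy, hyc⟩ := (hconn x c).exists_adj_dist_add_one (by rintro rfl; simp at hn)
    have hab : T.dist a b ≤ T.dist a x + T.dist x b := hconn.dist_triangle
    rcases hT.dist_eq_dist_add_one_of_adj a hxy with hya | hya
    · rcases hT.dist_eq_dist_add_one_of_adj b hxy with hyb | hyb
      · have := ih y (by omega)
        grind [dist_comm]
      · have := hT.dist_eq_dist_add_dist_of_adj hxy hyc hyb
        grind [dist_comm]
    · have := hT.dist_eq_dist_add_dist_of_adj hxy hyc hya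
      grind [dist_comm]

theorem dist_le_of_dist_le_of_dist_root_le {r x u v w : V} {k : ℕ}
    (hw : T.dist r w ≤ T.dist r x) (hu : T.dist x u ≤ k) (hv : T.dist x v ≤ k)
    (hvu : T.dist r v ≤ T.dist r u) (huw : T.dist u w ≤ k) : T.dist v w ≤ k := by
  have := hT.dist_add_dist_le_max x v w r
  have := hT.dist_add_dist_le_max x u r w
  grind [dist_comm]

end IsTree

end SimpleGraph

section SplitGraph

variable {V : Type*} {G : SimpleGraph V} {A B : Set V} {u v x : V} {k : ℕ}

theorem addCliqueOn_adj : (addCliqueOn G B).Adj u v ↔ u ≠ v ∧ (G.Adj u v ∨ u ∈ B ∧ v ∈ B) := by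
  simp only [addCliqueOn, fromRel_adj, G.adj_comm v u]
  tauto

theorem bipartitePower_adj :
    (bipartitePower G k).Adj u v ↔ u ≠ v ∧ Odd (G.dist u v) ∧ G.dist u v ≤ k := by
  simp only [bipartitePower, fromRel_adj, dist_comm (u := v), or_self]

theorem isClique_addCliqueOn : (addCliqueOn G B).IsClique B :=
  fun _ hu _ hv hne => addCliqueOn_adj.mpr ⟨hne, Or.inr ⟨hu, hv⟩⟩

theorem isSimpleVertex_of_forall_adj_compatible (hB : G.IsClique B) (hx : ∀ u, G.Adj x u → u ∈ B)
    (hcompat : ∀ u v, G.Adj x u → G.Adj x v → Compatible G u v) : IsSimpleVertex G x := by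
  have hsubset (v : V) (hv : G.Adj x v) : closedNbhd G x ⊆ closedNbhd G v := by
    rintro w (rfl | hw)
    · exact Or.inr hv.symm
    · by_cases hwv : w = v
      · exact Or.inl hwv
      · exact Or.inr (hB (hx v hv) (hx w hw) (Ne.symm hwv))
  rintro u (rfl | hu) v (rfl | hv)
  · exact Or.inl subset_rfl
  · exact Or.inl (hsubset v hv)
  · exact Or.inr (hsubset u hu)
  · exact hcompat u v hu hv

theorem IsBipartitionOf.mem_iff_notMem_of_adj (h : IsBipartitionOf G A B) (hadj : G.Adj u v) :
    u ∈ B ↔ v ∉ B := by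
  have hA (w : V) : w ∈ A ↔ w ∉ B :=
    ⟨fun hw => disjoint_left.mp h.1 hw, fun hw => (h.2.1 ▸ mem_univ w).resolve_right hw⟩
  rw [← h.2.2 u v hadj, hA, not_not]

theorem IsBipartitionOf.even_length_iff (h : IsBipartitionOf G A B) (w : G.Walk u v) :
    Even w.length ↔ (u ∈ B ↔ v ∈ B) := by
  induction w with
  | nil => simp
  | cons hadj _ ih =>
    rw [Walk.length_cons, Nat.even_add_one, ih, h.mem_iff_notMem_of_adj hadj]
    tauto

theorem IsBipartitionOf.odd_dist_iff (h : IsBipartitionOf G A B) (hr : G.Reachable u v) :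
    Odd (G.dist u v) ↔ (u ∈ B ↔ v ∉ B) := by
  obtain ⟨w, hw⟩ := hr.exists_walk_length_eq_dist
  rw [← hw, ← Nat.not_even_iff_odd, h.even_length_iff]
  tauto

theorem IsBipartitionOf.addCliqueOn_bipartitePower_adj_iff (h : IsBipartitionOf G A B)
    (hr : G.Reachable u v) (hu : u ∉ B) :
    (addCliqueOn (bipartitePower G k) B).Adj u v ↔ v ∈ B ∧ G.dist u v ≤ k := by
  rw [addCliqueOn_adj, bipartitePower_adj, h.odd_dist_iff hr]
  constructor
  · tauto
  · rintro ⟨hv, hk⟩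
    have huv : u ≠ v := by rintro rfl; exact hu hv
    exact ⟨huv, Or.inl ⟨huv, by tauto, hk⟩⟩

theorem IsBipartitionOf.closedNbhd_addCliqueOn_bipartitePower_subset
    (h : IsBipartitionOf G A B) (hconn : G.Connected) (hu : u ∈ B) (hv : v ∈ B)
    (hball : ∀ y ∉ B, G.dist u y ≤ k → G.dist v y ≤ k) :
    closedNbhd (addCliqueOn (bipartitePower G k) B) u ⊆
      closedNbhd (addCliqueOn (bipartitePower G k) B) v := by
  intro y hy
  by_cases hyB : y ∈ B
  · by_cases hyv : y = v
    · exact Or.inl hyv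
    · exact Or.inr (isClique_addCliqueOn hv hyB (Ne.symm hyv))
  · obtain rfl | hy := hy
    · exact absurd hu hyB
    have hyu := (h.addCliqueOn_bipartitePower_adj_iff (hconn y u) hyB).mp hy.symm
    refine Or.inr ((h.addCliqueOn_bipartitePower_adj_iff (hconn y v) hyB).mpr ⟨hv, ?_⟩).symm
    rw [dist_comm] at hyu ⊢
    exact hball y hyB hyu.2

end SplitGraph

theorem stmt1_general {V : Type*} (T : SimpleGraph V) (hT : T.IsTree) (r : V) (A B : Set V)
    (hbip : IsBipartitionOf T A B) (x : V) (hxA : x ∈ A)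
    (hfar : ∀ w : V, T.dist r w ≤ T.dist r x) (k : ℕ) :
    IsSimpleVertex (addCliqueOn (bipartitePower T k) B) x := by
  have hconn := hT.connected
  have hnbr (u : V) := hbip.addCliqueOn_bipartitePower_adj_iff (k := k) (hconn x u)
    (disjoint_left.mp hbip.1 hxA)
  refine isSimpleVertex_of_forall_adj_compatible isClique_addCliqueOn
    (fun u hu => ((hnbr u).mp hu).1) fun u v hu hv => ?_
  obtain ⟨huB, hxu⟩ := (hnbr u).mp hu
  obtain ⟨hvB, hxv⟩ := (hnbr v).mp hv
  wlog hvu : T.dist r v ≤ T.dist r u generalizing u v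
  · exact (this v u hv hu hvB hxv huB hxu (by omega)).symm
  exact Or.inl <| hbip.closedNbhd_addCliqueOn_bipartitePower_subset hconn huB hvB
    fun y _ huy => hT.dist_le_of_dist_le_of_dist_root_le (hfar y) hxu hxv hvu huy

theorem stmt1 {V : Type*} (T : SimpleGraph V) (hT : T.IsTree) (r : V) (A B : Set V)
    (hbip : IsBipartitionOf T A B) (x : V) (hxA : x ∈ A)
    (hfar : ∀ w : V, T.dist r w ≤ T.dist r x) (k : ℕ) (hk : Odd k) (hk0 : 0 < k) :
    IsSimpleVertex (addCliqueOn (bipartitePower T k) B) x :=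
  stmt1_general T hT r A B hbip x hxA hfar k
end

section
/- For any tree T and any odd positive integer k, the k-th bipartite power T^[k] is a chordal bipartite graph (a bipartite graph with no induced cycle of length greater than 4). -/
/-!
The colour classes of `T^[k]` are given by the parity of the distance to a fixed vertex, since
tree distances are additive modulo `2`.

Suppose `v 0, …, v (N - 1)` with `N ≥ 5` is an induced cycle of `T^[k]`. Pick a pair
`x = v a`, `y = v b`: a consecutive pair if all non-consecutive pairs are more than `k` apart,
and otherwise a closest non-consecutive pair (whose distance is then even). Cutting the tree at
the middle edge of the geodesic from `x` to `y` splits it into `{z | d z x < d z y}` and its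
complement. If a cycle edge `u w` crosses the cut, the four-point identity
`d x w + d u y = d x y + d u w` and the choice of the pair force `u` or `w` to be cyclically next
to both `x` and `y`. But the arc of the cycle from the successor of `y` to the predecessor of `x`
starts on the side of `y`, ends on the side of `x`, and contains no such vertex.
-/

open SimpleGraph Set

namespace SimpleGraph

variable {V : Type*} {G T : SimpleGraph V}

lemma bipartitePower_adj {k : ℕ} {u w : V} :
    (bipartitePower G k).Adj u w ↔ Odd (G.dist u w) ∧ G.dist u w ≤ k := by
  rw [bipartitePower, fromRel_adj, dist_comm (u := w), or_self, and_iff_right_iff_imp]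
  rintro ⟨hodd, -⟩ rfl
  simp at hodd

lemma Walk.dist_add_dist_of_mem_support (hG : G.Connected) {x y z : V} (γ : G.Walk x y)
    (hγ : γ.length = G.dist x y) (hz : z ∈ γ.support) :
    G.dist x z + G.dist z y = G.dist x y := by
  classical
  have hsplit := congrArg Walk.length (γ.take_spec hz)
  rw [Walk.length_append] at hsplit
  have := dist_le (γ.takeUntil z hz)
  have := dist_le (γ.dropUntil z hz)
  have := hG.dist_triangle (u := x) (v := z) (w := y)
  omega

lemma Walk.dist_getVert_of_length_eq_dist (hG : G.Connected) {x y : V} (γ : G.Walk x y)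
    (hγ : γ.length = G.dist x y) {i : ℕ} (hi : i ≤ γ.length) :
    G.dist x (γ.getVert i) = i ∧ G.dist (γ.getVert i) y = γ.length - i := by
  have h₁ := dist_le (γ.take i)
  have h₂ := dist_le (γ.drop i)
  have := hG.dist_triangle (u := x) (v := γ.getVert i) (w := y)
  rw [Walk.take_length, inf_of_le_left hi] at h₁
  rw [Walk.drop_length] at h₂
  omega

namespace IsTree

lemma even_dist_add_dist_add_dist (hT : T.IsTree) (x y z : V) :
    Even (T.dist x y + T.dist y z + T.dist z x) := by
  obtain ⟨p, hp⟩ := hT.connected.exists_walk_length_eq_dist x y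
  obtain ⟨q, hq⟩ := hT.connected.exists_walk_length_eq_dist y z
  obtain ⟨r, hr⟩ := hT.connected.exists_walk_length_eq_dist z x
  have := two_colorable_iff_forall_loop_even.mp hT.colorable_two x ((p.append q).append r)
  rwa [Walk.length_append, Walk.length_append, hp, hq, hr] at this

lemma dist_eq_dist_add_one_add_dist (hT : T.IsTree) {p q x y : V} (hpq : T.Adj p q)
    (hx : T.dist x p < T.dist x q) (hy : T.dist y q < T.dist y p) :
    T.dist x y = T.dist x p + 1 + T.dist q y := by
  obtain ⟨β, hβ⟩ := hT.connected.exists_walk_length_eq_dist x p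
  obtain ⟨γ, hγ⟩ := hT.connected.exists_walk_length_eq_dist x y
  obtain ⟨δ, hδ⟩ := hT.connected.exists_walk_length_eq_dist y q
  have hbridge := isBridge_iff_forall_walk_mem_edges.mp
    (isAcyclic_iff_forall_adj_isBridge.mp hT.isAcyclic hpq) (β.reverse.append (γ.append δ))
  simp only [Walk.edges_append, Walk.edges_reverse, List.mem_append, List.mem_reverse] at hbridge
  rcases hbridge with hqβ | hpγ | hpδ
  · have := β.dist_add_dist_of_mem_support hT.connected hβ (β.snd_mem_support_of_mem_edges hqβ)
    omega
  · have := γ.dist_add_dist_of_mem_support hT.connected hγ (γ.fst_mem_support_of_mem_edges hpγ)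
    have := hT.dist_eq_dist_add_one_of_adj y hpq
    simp only [dist_comm (v := y)] at *
    omega
  · have := δ.dist_add_dist_of_mem_support hT.connected hδ (δ.fst_mem_support_of_mem_edges hpδ)
    omega

theorem dist_add_dist_eq_of_dist_lt_of_dist_le (hT : T.IsTree) {x y u w : V}
    (hu : T.dist u x < T.dist u y) (hw : T.dist w y ≤ T.dist w x) :
    T.dist x w + T.dist u y = T.dist x y + T.dist u w := by
  have hxy : x ≠ y := by rintro rfl; exact lt_irrefl _ hu
  have hD := hT.connected.pos_dist_of_ne hxy
  obtain ⟨γ, hγ⟩ := hT.connected.exists_walk_length_eq_dist x y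
  -- `p q` below is the middle edge of a geodesic from `x` to `y`; `u` lies on the side of `p`
  -- and `w` on the side of `q`.
  set X := (T.dist x y - 1) / 2 with hX
  have hpq := γ.adj_getVert_succ (i := X) (by omega)
  obtain ⟨hxp, hpy⟩ := γ.dist_getVert_of_length_eq_dist hT.connected hγ (i := X) (by omega)
  obtain ⟨hxq, hqy⟩ :=
    γ.dist_getVert_of_length_eq_dist hT.connected hγ (i := X + 1) (by omega)
  generalize γ.getVert X = p at hpq hxp hpy
  generalize γ.getVert (X + 1) = q at hpq hxq hqy
  rw [hγ] at hpy hqy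
  have hyq : T.dist y q < T.dist y p := by rw [dist_comm, dist_comm (u := y)]; omega
  have hside (z : V) : T.dist z p < T.dist z q ∨ T.dist z q < T.dist z p :=
    (hT.dist_ne_of_adj z hpq).lt_or_gt
  have hup : T.dist u p < T.dist u q := by
    refine (hside u).resolve_right fun huq => ?_
    have hxu := hT.dist_eq_dist_add_one_add_dist hpq (x := x) (by omega) huq
    have := hT.connected.dist_triangle (u := u) (v := q) (w := y)
    rw [dist_comm (u := x), dist_comm (u := q)] at hxu
    omega
  have hwq : T.dist w q < T.dist w p := by
    refine (hside w).resolve_left fun hwp => ?_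
    have := hT.dist_eq_dist_add_one_add_dist hpq hwp hyq
    have := hT.connected.dist_triangle (u := w) (v := p) (w := x)
    rw [dist_comm (u := p)] at this
    omega
  have := hT.dist_eq_dist_add_one_add_dist hpq (x := x) (by omega) hwq
  have := hT.dist_eq_dist_add_one_add_dist hpq hup hyq
  have := hT.dist_eq_dist_add_one_add_dist hpq hup hwq
  omega

end IsTree

end SimpleGraph

def CycleNear {N : ℕ} (i j : ZMod N) : Prop :=
  i = j ∨ j = i + 1 ∨ i = j + 1

lemma CycleNear.symm {N : ℕ} {i j : ZMod N} (h : CycleNear i j) : CycleNear j i := by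
  unfold CycleNear at *
  tauto

lemma cycleNear_add_natCast_iff {N : ℕ} [NeZero N] (hN : 2 ≤ N) (a : ZMod N) {s : ℕ}
    (hs : s < N) : CycleNear a (a + s) ↔ s = 0 ∨ s = 1 ∨ s + 1 = N := by
  rw [CycleNear, left_eq_add, add_right_inj, add_assoc, left_eq_add, ← Nat.cast_zero,
    ← Nat.cast_one, ← Nat.cast_add, ZMod.natCast_eq_natCast_iff', ZMod.natCast_eq_natCast_iff',
    ZMod.natCast_eq_natCast_iff', Nat.mod_eq_of_lt hs, Nat.zero_mod,
    Nat.mod_eq_of_lt (show 1 < N by omega)]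
  rcases (show s + 1 ≤ N from hs).lt_or_eq with h | h
  · rw [Nat.mod_eq_of_lt h]
    omega
  · rw [h, Nat.mod_self]
    omega

lemma exists_eq_add_of_not_cycleNear {N : ℕ} [NeZero N] (hN : 2 ≤ N) {a b : ZMod N}
    (hab : ¬ CycleNear a b) : ∃ s : ℕ, b = a + s ∧ 2 ≤ s ∧ s + 2 ≤ N := by
  have hb : b = a + ((b - a).val : ZMod N) := by rw [ZMod.natCast_zmod_val, add_sub_cancel]
  have := ZMod.val_lt (b - a)
  rw [hb, cycleNear_add_natCast_iff hN a this] at hab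
  exact ⟨_, hb, by omega, by omega⟩

namespace SimpleGraph

variable {V : Type*} {T : SimpleGraph V} {k N : ℕ} {v : ZMod N → V} {a b : ZMod N}

-- A consecutive pair has these properties when all non-consecutive pairs are more than `k`
-- apart, and otherwise a closest non-consecutive pair does.
structure IsExtremalPair (T : SimpleGraph V) (k : ℕ) (v : ZMod N → V) (a b : ZMod N) :
    Prop where
  ne : v a ≠ v b
  lt_of_odd : ∀ i j, ¬ CycleNear i j → Odd (T.dist (v i) (v j) + T.dist (v a) (v b)) →
    k < T.dist (v i) (v j)
  add_lt_of_odd : ∀ i j i' j', ¬ CycleNear i j → ¬ CycleNear i' j' →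
    Odd (T.dist (v i) (v j) + T.dist (v i') (v j') + T.dist (v a) (v b)) →
    T.dist (v a) (v b) + k < T.dist (v i) (v j) + T.dist (v i') (v j')

namespace IsExtremalPair

lemma symm (h : IsExtremalPair T k v a b) : IsExtremalPair T k v b a := by
  have hba : T.dist (v b) (v a) = T.dist (v a) (v b) := dist_comm
  exact ⟨h.ne.symm, hba ▸ h.lt_of_odd, hba ▸ h.add_lt_of_odd⟩

lemma cycleNear_of_dist_le (hT : T.IsTree)
    (hstep : ∀ i, Odd (T.dist (v i) (v (i + 1))) ∧ T.dist (v i) (v (i + 1)) ≤ k)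
    (h : IsExtremalPair T k v a b) {i : ZMod N} (hi : CycleNear b i)
    (hle : T.dist (v i) (v a) ≤ T.dist (v i) (v b)) : CycleNear a i := by
  by_contra hfar
  have hib : i ≠ b := by
    rintro rfl
    exact h.ne (hT.connected.dist_eq_zero_iff.mp (by simpa using hle)).symm
  obtain ⟨hodd, hk⟩ : Odd (T.dist (v i) (v b)) ∧ T.dist (v i) (v b) ≤ k := by
    rcases hi with rfl | rfl | rfl
    · exact absurd rfl hib
    · rw [dist_comm]
      exact hstep b
    · exact hstep i
  have hpar := hT.even_dist_add_dist_add_dist (v i) (v a) (v b)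
  rw [dist_comm (u := v b)] at hpar
  have := h.lt_of_odd a i hfar (by
    rw [Nat.odd_iff] at hodd ⊢
    rw [Nat.even_iff] at hpar
    rw [dist_comm]
    omega)
  rw [dist_comm] at this
  omega

lemma cycleNear_of_crossing (hT : T.IsTree)
    (hstep : ∀ i, Odd (T.dist (v i) (v (i + 1))) ∧ T.dist (v i) (v (i + 1)) ≤ k)
    (h : IsExtremalPair T k v a b) {j : ZMod N}
    (hu : T.dist (v (j + 1)) (v a) < T.dist (v (j + 1)) (v b))
    (hw : T.dist (v j) (v b) ≤ T.dist (v j) (v a)) :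
    (CycleNear a (j + 1) ∧ CycleNear b (j + 1)) ∨ (CycleNear a j ∧ CycleNear b j) := by
  have hcross := hT.dist_add_dist_eq_of_dist_lt_of_dist_le hu hw
  obtain ⟨hodd, hk⟩ := hstep j
  rw [dist_comm] at hodd hk
  have hnear : CycleNear a j ∨ CycleNear (j + 1) b := by
    by_contra! hfar
    have := h.add_lt_of_odd a j (j + 1) b hfar.1 hfar.2 (by
      rw [hcross, Nat.odd_iff]
      rw [Nat.odd_iff] at hodd
      omega)
    omega
  rcases hnear with haj | hjb
  · exact Or.inr ⟨haj, h.symm.cycleNear_of_dist_le hT hstep haj hw⟩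
  · exact Or.inl ⟨h.cycleNear_of_dist_le hT hstep hjb.symm hu.le, hjb.symm⟩

lemma false_of_eq_add [NeZero N] (hT : T.IsTree)
    (hstep : ∀ i, Odd (T.dist (v i) (v (i + 1))) ∧ T.dist (v i) (v (i + 1)) ≤ k)
    (h : IsExtremalPair T k v a b) {s : ℕ} (hb : b = a + s) (hs : 1 ≤ s) (hsN : s + 3 ≤ N) :
    False := by
  have hfar (c : ZMod N) (t : ℕ) (ht : 2 ≤ t) (htN : t + 2 ≤ N) : ¬ CycleNear c (c + t) := by
    rw [cycleNear_add_natCast_iff (by omega) c (by omega)]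
    omega
  have harc (t : ℕ) (hst : s + 1 ≤ t) (htN : t + 1 ≤ N) :
      T.dist (v (a + t)) (v b) ≤ T.dist (v (a + t)) (v a) := by
    induction t, hst using Nat.le_induction with
    | base =>
      by_contra! hlt
      have hnear : CycleNear b (a + (s + 1 : ℕ)) := by
        right; left
        rw [hb]; push_cast; ring
      exact hfar a (s + 1) (by omega) (by omega) (h.cycleNear_of_dist_le hT hstep hnear hlt.le)
    | succ t hst ih =>
      rw [Nat.cast_succ, ← add_assoc]
      by_contra! hlt
      rcases h.cycleNear_of_crossing hT hstep hlt (ih (by omega)) with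
        ⟨-, hnear⟩ | ⟨hnear, -⟩
      · refine hfar b (t + 1 - s) (by omega) (by omega) ?_
        convert hnear using 1
        rw [hb]; push_cast [Nat.cast_sub (show s ≤ t + 1 by omega)]; ring
      · exact hfar a t (by omega) (by omega) hnear
  have hlast : CycleNear a (a + (N - 1 : ℕ)) :=
    (cycleNear_add_natCast_iff (by omega) a (by omega)).mpr (by omega)
  refine hfar b (N - 1 - s) (by omega) (by omega) ?_
  convert h.symm.cycleNear_of_dist_le hT hstep hlast (harc (N - 1) (by omega) (by omega)) using 1
  rw [hb]
  push_cast [Nat.cast_sub (show s ≤ N - 1 by omega), Nat.cast_sub (show 1 ≤ N by omega)]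
  ring

end IsExtremalPair

lemma isExtremalPair_zero_one
    (hstep : ∀ i, Odd (T.dist (v i) (v (i + 1))) ∧ T.dist (v i) (v (i + 1)) ≤ k)
    (hfar : ∀ i j, ¬ CycleNear i j → k < T.dist (v i) (v j)) : IsExtremalPair T k v 0 1 := by
  obtain ⟨hodd, hk⟩ := hstep 0
  rw [zero_add] at hodd hk
  refine ⟨fun h => ?_, fun i j hij _ => hfar i j hij, fun i j i' j' hij hij' _ => ?_⟩
  · rw [h, dist_self] at hodd
    exact Nat.not_odd_zero hodd
  · have := hfar i j hij
    have := hfar i' j' hij'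
    omega

lemma exists_isExtremalPair [NeZero N] (hinj : Function.Injective v)
    (hv : ∀ i j, Odd (T.dist (v i) (v j)) → T.dist (v i) (v j) ≤ k →
      j = i + 1 ∨ i = j + 1)
    (hclose : ∃ i j, ¬ CycleNear i j ∧ T.dist (v i) (v j) ≤ k) :
    ∃ a b, ¬ CycleNear a b ∧ IsExtremalPair T k v a b := by
  obtain ⟨i₀, j₀, hij₀, hk₀⟩ := hclose
  obtain ⟨⟨a, b⟩, hab, hpair⟩ :=
    Set.exists_min_image {p : ZMod N × ZMod N | ¬ CycleNear p.1 p.2}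
      (fun p => T.dist (v p.1) (v p.2)) (Set.toFinite _) ⟨(i₀, j₀), hij₀⟩
  have hmin (i j : ZMod N) (hij : ¬ CycleNear i j) : T.dist (v a) (v b) ≤ T.dist (v i) (v j) :=
    hpair (i, j) hij
  have hfar_odd (i j : ZMod N) (hij : ¬ CycleNear i j) (hodd : Odd (T.dist (v i) (v j))) :
      k < T.dist (v i) (v j) := by
    by_contra! hk
    exact hij (Or.inr (hv i j hodd hk))
  have hD : T.dist (v a) (v b) ≤ k := (hmin i₀ j₀ hij₀).trans hk₀
  have hD_even : Even (T.dist (v a) (v b)) := by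
    by_contra hodd
    exact absurd (hfar_odd a b hab (Nat.not_even_iff_odd.mp hodd)) (by omega)
  refine ⟨a, b, hab, fun h => hab (Or.inl (hinj h)), fun i j hij hodd => hfar_odd i j hij ?_,
    fun i j i' j' hij hij' hodd => ?_⟩
  · exact (Nat.odd_add.mp hodd).mpr hD_even
  · have := hmin i j hij
    have := hmin i' j' hij'
    rcases Nat.even_or_odd (T.dist (v i) (v j)) with heven | hodd'
    · have := hfar_odd i' j' hij' (by
        rw [Nat.odd_iff] at hodd ⊢; rw [Nat.even_iff] at heven hD_even; omega)
      omega
    · have := hfar_odd i j hij hodd'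
      omega

theorem IsTree.isEmpty_cycleGraph_embedding_bipartitePower (hT : T.IsTree) (k : ℕ) {n : ℕ}
    (hn : 4 < n) : IsEmpty (cycleGraph n ↪g bipartitePower T k) := by
  obtain ⟨m, rfl⟩ : ∃ m, n = m + 2 := ⟨n - 2, by omega⟩
  refine ⟨fun e => ?_⟩
  let v : ZMod (m + 2) → V := e
  have hv (i j : ZMod (m + 2)) :
      Odd (T.dist (v i) (v j)) ∧ T.dist (v i) (v j) ≤ k ↔ j = i + 1 ∨ i = j + 1 := by
    refine (bipartitePower_adj.symm.trans e.map_rel_iff).trans ?_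
    change i - j = 1 ∨ j - i = 1 ↔ _
    rw [sub_eq_iff_eq_add', sub_eq_iff_eq_add', or_comm]
  have hstep (i : ZMod (m + 2)) := (hv i (i + 1)).mpr (Or.inl rfl)
  by_cases hfar : ∀ i j, ¬ CycleNear i j → k < T.dist (v i) (v j)
  · exact (isExtremalPair_zero_one hstep hfar).false_of_eq_add hT hstep (s := 1)
      (by rw [Nat.cast_one, zero_add]) le_rfl (by omega)
  push Not at hfar
  obtain ⟨a, b, hab, h⟩ :=
    exists_isExtremalPair e.injective (fun i j hodd hk => (hv i j).mp ⟨hodd, hk⟩) hfar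
  obtain ⟨s, hb, hs, hsN⟩ := exists_eq_add_of_not_cycleNear (by omega) hab
  rcases (show s + 3 ≤ m + 2 ∨ s = m by omega) with hsN | rfl
  · exact h.false_of_eq_add hT hstep hb (by omega) hsN
  · refine h.symm.false_of_eq_add hT hstep (s := 2) ?_ (by omega) (by omega)
    rw [hb, add_assoc, ← Nat.cast_add, ZMod.natCast_self, add_zero]

theorem IsTree.exists_isBipartitionOf_bipartitePower (hT : T.IsTree) (k : ℕ) :
    ∃ A B : Set V, IsBipartitionOf (bipartitePower T k) A B := by
  obtain ⟨r⟩ := hT.connected.nonempty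
  refine ⟨{z | Even (T.dist r z)}, {z | Even (T.dist r z)}ᶜ, disjoint_compl_right,
    union_compl_self _, fun u w huw => ?_⟩
  have hodd := (bipartitePower_adj.mp huw).1
  have hpar := hT.even_dist_add_dist_add_dist r u w
  rw [dist_comm (u := w), Nat.even_add, Nat.even_add, ← Nat.not_odd_iff_even (n := T.dist u w)]
    at hpar
  simp only [Set.mem_ofPred_eq, Set.mem_compl_iff]
  tauto

end SimpleGraph

theorem stmt2_general {V : Type*} (T : SimpleGraph V) (hT : T.IsTree) (k : ℕ) :
    ChordalBipartite (bipartitePower T k) :=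
  ⟨hT.exists_isBipartitionOf_bipartitePower k,
    fun _ hn => hT.isEmpty_cycleGraph_embedding_bipartitePower k hn⟩

theorem stmt2 {V : Type*} (T : SimpleGraph V) (hT : T.IsTree) (k : ℕ) (hk : Odd k)
    (hk0 : 0 < k) :
    ChordalBipartite (bipartitePower T k) :=
  stmt2_general T hT k
end

section
/- For every positive integer b, there exists a chordal bipartite graph G with box(G) > b. In particular, the class of chordal bipartite graphs has unbounded boxicity. -/
open SimpleGraph Set

/-!
Take vertices `a(i,j)` and `b(i,j)` for pairs `i < j` in `Fin N`, with `a(i,j) ∼ b(k,l)` iff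
`j ≤ k` or `i = l`. Listing the pairs lexicographically, decreasing for the `a`s and increasing for
the `b`s, the biadjacency matrix has no `Γ`; at the largest `a`-vertex of an induced cycle of
length at least five, this would force a chord, so the graph is chordal bipartite.

In a box representation each non-adjacent pair `a(x,y), b(x,y)` is separated in some coordinate,
with one of the two boxes below the other. Since `a(x,y) ∼ b(y,z)` and `a(y,z) ∼ b(x,y)`, the pairs
`(x,y)` and `(y,z)` are never separated in the same coordinate with the same orientation. Hence
`x` is determined by the set of (coordinate, orientation) separating some pair `(x,·)`, so that
`N ≤ 4 ^ k` in dimension `k`.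
-/

theorem Set.Icc_inter_Icc_nonempty_iff {α : Type*} [Lattice α] {a b c d : α} (hab : a ≤ b)
    (hcd : c ≤ d) : (Icc a b ∩ Icc c d).Nonempty ↔ a ≤ d ∧ c ≤ b := by
  rw [Icc_inter_Icc, nonempty_Icc, sup_le_iff, le_inf_iff, le_inf_iff]
  tauto

section Boxicity

variable {V W : Type*} {G : SimpleGraph V} {H : SimpleGraph W} {k : ℕ}

theorem isBoxRep_iff : IsBoxRep G k ↔ ∃ lo hi : V → Fin k → ℝ, (∀ v i, lo v i ≤ hi v i) ∧
    ∀ u v, G.Adj u v ↔ u ≠ v ∧ ∀ i, lo u i ≤ hi v i ∧ lo v i ≤ hi u i := by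
  refine exists₂_congr fun lo hi => and_congr_right fun hle => ?_
  simp only [Icc_inter_Icc_nonempty_iff (hle _ _) (hle _ _)]

theorem IsBoxRep.of_embedding (f : G ↪g H) (h : IsBoxRep H k) : IsBoxRep G k := by
  obtain ⟨lo, hi, hle, hadj⟩ := h
  refine ⟨lo ∘ f, hi ∘ f, fun v => hle (f v), fun u v => ?_⟩
  rw [← f.map_adj_iff, hadj, f.injective.ne_iff]
  rfl

theorem exists_isBoxRep [Finite V] (G : SimpleGraph V) : ∃ k, IsBoxRep G k := by
  classical
  obtain ⟨k, ⟨e⟩⟩ := Finite.exists_equiv_fin V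
  -- in the coordinate of `w`, the box of `w` is `{0}`, those of its non-neighbours `{1}`,
  -- and all others `[0, 1]`
  refine ⟨k, isBoxRep_iff.mpr ⟨fun x c => if x ≠ e.symm c ∧ ¬G.Adj (e.symm c) x then 1 else 0,
    fun x c => if x = e.symm c then 0 else 1, fun x c => by dsimp only; split_ifs <;> simp_all,
    fun u v => ?_⟩⟩
  constructor
  · intro h
    refine ⟨h.ne, fun c => ?_⟩
    dsimp only
    split_ifs <;> simp_all [adj_comm]
  · rintro ⟨hne, h⟩
    by_contra hnadj
    have := (h (e u)).2
    norm_num [hne.symm, hnadj] at this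

theorem isBoxRep_boxicity [Finite V] (G : SimpleGraph V) : IsBoxRep G (boxicity G) :=
  Nat.sInf_mem (exists_isBoxRep G)

end Boxicity

section ChordalBipartite

variable {V W : Type*} {G : SimpleGraph V} {H : SimpleGraph W}

theorem ChordalBipartite.of_embedding (f : G ↪g H) (h : ChordalBipartite H) :
    ChordalBipartite G := by
  obtain ⟨⟨A, B, hdisj, hcover, hside⟩, hcycle⟩ := h
  refine ⟨⟨f ⁻¹' A, f ⁻¹' B, hdisj.preimage f, ?_, fun u v h => hside _ _ (f.map_adj_iff.mpr h)⟩,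
    fun n hn => ?_⟩
  · rw [← preimage_union, hcover, preimage_univ]
  · have := hcycle n hn
    exact Function.isEmpty (f.comp ·)

end ChordalBipartite

section CycleGraph

open scoped Fin.CommRing

theorem Fin.natCast_ne_zero_of_pos_of_lt {n a : ℕ} [NeZero n] (h0 : 0 < a) (ha : a < n) :
    (a : Fin n) ≠ 0 := by
  rw [Ne, Fin.natCast_eq_zero]
  exact Nat.not_dvd_of_pos_of_lt h0 ha

theorem cycleGraph_adj_add {n : ℕ} (x d : Fin (n + 2)) (hd : d = 1 ∨ d = -1) :
    (cycleGraph (n + 2)).Adj x (x + d) := by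
  rw [cycleGraph_adj]
  rcases hd with rfl | rfl <;> simp

theorem add_self_ne_zero_of_eq_one_or_neg_one {n : ℕ} {d : Fin (n + 3)} (hd : d = 1 ∨ d = -1) :
    d + d ≠ 0 := by
  have h2 : ((2 : ℕ) : Fin (n + 3)) ≠ 0 := Fin.natCast_ne_zero_of_pos_of_lt (by norm_num) (by omega)
  push_cast at h2
  rcases hd with rfl | rfl
  · exact fun h => h2 (by linear_combination h)
  · exact fun h => h2 (by linear_combination -h)

theorem cycleGraph_not_adj_add_add_sub {n : ℕ} (x d : Fin (n + 5)) (hd : d = 1 ∨ d = -1) :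
    ¬(cycleGraph (n + 5)).Adj (x + d + d) (x - d) := by
  have h2 : ((2 : ℕ) : Fin (n + 5)) ≠ 0 := Fin.natCast_ne_zero_of_pos_of_lt (by norm_num) (by omega)
  have h4 : ((4 : ℕ) : Fin (n + 5)) ≠ 0 := Fin.natCast_ne_zero_of_pos_of_lt (by norm_num) (by omega)
  push_cast at h2 h4
  rw [cycleGraph_adj]
  rcases hd with rfl | rfl <;> rintro (h | h)
  · exact h2 (by linear_combination h)
  · exact h4 (by linear_combination -h)
  · exact h4 (by linear_combination -h)
  · exact h2 (by linear_combination h)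

end CycleGraph

section BipartiteOfRel

variable {α β : Type*} {R : α → β → Prop}

def bipartiteOfRel (R : α → β → Prop) : SimpleGraph (α ⊕ β) where
  Adj
    | .inl a, .inr b => R a b
    | .inr b, .inl a => R a b
    | _, _ => False
  symm := ⟨by rintro (a | b) (a' | b') h <;> exact h⟩
  loopless := ⟨by rintro (a | b) h <;> exact h⟩

@[simp]
theorem bipartiteOfRel_adj_inl_inr {a : α} {b : β} :
    (bipartiteOfRel R).Adj (.inl a) (.inr b) ↔ R a b := Iff.rfl

theorem bipartiteOfRel_adj_inl {a : α} {v : α ⊕ β} (h : (bipartiteOfRel R).Adj (.inl a) v) :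
    ∃ b, v = .inr b ∧ R a b := by
  rcases v with a' | b
  exacts [h.elim, ⟨b, rfl, h⟩]

theorem bipartiteOfRel_adj_inr {b : β} {v : α ⊕ β} (h : (bipartiteOfRel R).Adj v (.inr b)) :
    ∃ a, v = .inl a ∧ R a b := by
  rcases v with a | b'
  exacts [⟨a, rfl, h⟩, h.elim]

theorem isBipartitionOf_bipartiteOfRel :
    IsBipartitionOf (bipartiteOfRel R) (range .inl) (range .inr) := by
  refine ⟨isCompl_range_inl_range_inr.disjoint, isCompl_range_inl_range_inr.sup_eq_top, ?_⟩
  rintro (a | b) (a' | b') h <;> simp_all [bipartiteOfRel]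

-- the biadjacency matrix of `R`, rows in decreasing and columns in increasing order, has no `Γ`
def GammaFree [LT α] [LT β] (R : α → β → Prop) : Prop :=
  ∀ ⦃a a' : α⦄ ⦃b b' : β⦄, a' < a → b < b' → R a b → R a b' → R a' b → R a' b'

theorem hasNoInducedCycleGT_bipartiteOfRel [LinearOrder α] [LinearOrder β] (hR : GammaFree R) :
    HasNoInducedCycleGT (bipartiteOfRel R) 4 := by
  intro n hn
  obtain ⟨m, rfl⟩ : ∃ m, n = m + 5 := ⟨n - 5, by omega⟩
  refine ⟨fun f => ?_⟩
  have hadj : ∀ x d, (d = 1 ∨ d = -1) → (bipartiteOfRel R).Adj (f x) (f (x + d)) :=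
    fun x d hd => f.map_adj_iff.mpr (cycleGraph_adj_add x d hd)
  have hleft : {a | .inl a ∈ range f}.Nonempty := by
    rcases h : f 0 with a | b
    · exact ⟨a, 0, h⟩
    · obtain ⟨a, ha, -⟩ := bipartiteOfRel_adj_inr (h ▸ (hadj 0 1 (.inl rfl)).symm)
      exact ⟨a, _, ha⟩
  obtain ⟨a, ⟨q, hq⟩, hmax⟩ := exists_max_image _ id
    ((finite_range f).preimage Sum.inl_injective.injOn) hleft
  -- the cycle continues from `f (q + d) = inr b` to some `inl a'` with `a' < a`,
  -- and the `Γ` on `a' < a`, `b < b'` is the chord `a' ∼ b'`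
  have key : ∀ d, (d = 1 ∨ d = -1) → ∀ b b', f (q + d) = .inr b → f (q - d) = .inr b' →
      ¬b < b' := by
    intro d hd b b' hb hb' hbb'
    have hab : R a b := by simpa [hq, hb] using hadj q d hd
    have hab' : R a b' := by simpa [hq, hb'] using (hadj (q - d) d hd).symm
    obtain ⟨a', ha', ha'b⟩ := bipartiteOfRel_adj_inr (hb ▸ (hadj (q + d) d hd).symm)
    have ha'a : a' < a := by
      refine (hmax a' ⟨_, ha'⟩).lt_of_ne fun h : a' = a =>
        add_self_ne_zero_of_eq_one_or_neg_one hd ?_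
      have := f.injective (ha'.trans (h ▸ hq.symm))
      rwa [add_assoc, add_eq_left] at this
    refine cycleGraph_not_adj_add_add_sub q d hd (f.map_adj_iff.mp ?_)
    rw [ha', hb']
    exact hR ha'a hbb' hab hab' ha'b
  obtain ⟨b, hb, -⟩ := bipartiteOfRel_adj_inl (hq ▸ hadj q 1 (.inl rfl))
  obtain ⟨b', hb', -⟩ := bipartiteOfRel_adj_inl (hq ▸ hadj q (-1) (.inr rfl))
  rw [← sub_eq_add_neg] at hb'
  rcases lt_trichotomy b b' with h | rfl | h
  · exact key 1 (.inl rfl) b b' hb hb' h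
  · exact add_self_ne_zero_of_eq_one_or_neg_one (d := 1) (.inl rfl)
      (by simpa [eq_sub_iff_add_eq, add_assoc] using f.injective (hb.trans hb'.symm))
  · exact key (-1) (.inr rfl) b' b (by rwa [← sub_eq_add_neg]) (by rwa [sub_neg_eq_add]) h

theorem chordalBipartite_bipartiteOfRel [LinearOrder α] [LinearOrder β] (hR : GammaFree R) :
    ChordalBipartite (bipartiteOfRel R) :=
  ⟨⟨_, _, isBipartitionOf_bipartiteOfRel⟩, hasNoInducedCycleGT_bipartiteOfRel hR⟩

end BipartiteOfRel

section ShiftGraph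

variable (α : Type*) [LinearOrder α]

def shiftRel (p q : α ×ₗ α) : Prop :=
  (ofLex p).1 < (ofLex p).2 ∧ (ofLex q).1 < (ofLex q).2 ∧
    ((ofLex p).2 ≤ (ofLex q).1 ∨ (ofLex p).1 = (ofLex q).2)

abbrev shiftBipartiteGraph : SimpleGraph ((α ×ₗ α) ⊕ (α ×ₗ α)) :=
  bipartiteOfRel (shiftRel α)

variable {α}

theorem gammaFree_shiftRel : GammaFree (shiftRel α) := by
  rintro p p' q q' hp hq ⟨hij, hkl, h⟩ ⟨-, hkl', h'⟩ ⟨hij', -, h''⟩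
  rw [Prod.Lex.lt_iff] at hp hq
  exact ⟨hij', hkl', by grind⟩

theorem card_le_of_isBoxRep_shiftBipartiteGraph [Fintype α] {k : ℕ}
    (h : IsBoxRep (shiftBipartiteGraph α) k) : Fintype.card α ≤ 4 ^ k := by
  classical
  obtain ⟨lo, hi, -, hadj⟩ := isBoxRep_iff.mp h
  let a (x y : α) : (α ×ₗ α) ⊕ (α ×ₗ α) := .inl (toLex (x, y))
  let b (x y : α) : (α ×ₗ α) ⊕ (α ×ₗ α) := .inr (toLex (x, y))
  have hsep : ∀ ⦃x y⦄, x < y →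
      ∃ c, hi (a x y) c < lo (b x y) c ∨ hi (b x y) c < lo (a x y) c := by
    intro x y hxy
    have hnadj : ¬(shiftBipartiteGraph α).Adj (a x y) (b x y) := fun ⟨_, _, h⟩ =>
      h.elim hxy.not_ge hxy.ne
    obtain ⟨c, hc⟩ := not_forall.mp (not_and.mp (hnadj.comp (hadj _ _).mpr) Sum.inl_ne_inr)
    exact ⟨c, (not_and_or.mp hc).symm.imp not_le.mp not_le.mp⟩
  have hsame : ∀ ⦃x y z⦄, x < y → y < z → ∀ c,
      ¬(hi (a x y) c < lo (b x y) c ∧ hi (a y z) c < lo (b y z) c) ∧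
      ¬(hi (b x y) c < lo (a x y) c ∧ hi (b y z) c < lo (a y z) c) := by
    intro x y z hxy hyz c
    have h₁ := ((hadj (a x y) (b y z)).mp ⟨hxy, hyz, .inl le_rfl⟩).2 c
    have h₂ := ((hadj (a y z) (b x y)).mp ⟨hyz, hxy, .inr rfl⟩).2 c
    constructor <;> rintro ⟨h₃, h₄⟩ <;> linarith [h₁.1, h₁.2, h₂.1, h₂.2]
  let sep (x : α) : Set (Fin k) × Set (Fin k) :=
    ({c | ∃ y, x < y ∧ hi (a x y) c < lo (b x y) c},
      {c | ∃ y, x < y ∧ hi (b x y) c < lo (a x y) c})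
  have hinj : sep.Injective := by
    intro x y hxy_eq
    by_contra hne
    wlog hxy : x < y generalizing x y
    · exact this hxy_eq.symm (Ne.symm hne) ((Ne.lt_or_gt hne).resolve_left hxy)
    obtain ⟨c, hc | hc⟩ := hsep hxy
    · obtain ⟨z, hyz, hz⟩ : c ∈ (sep y).1 := hxy_eq ▸ ⟨y, hxy, hc⟩
      exact (hsame hxy hyz c).1 ⟨hc, hz⟩
    · obtain ⟨z, hyz, hz⟩ : c ∈ (sep y).2 := hxy_eq ▸ ⟨y, hxy, hc⟩
      exact (hsame hxy hyz c).2 ⟨hc, hz⟩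
  calc Fintype.card α ≤ Fintype.card (Set (Fin k) × Set (Fin k)) :=
        Fintype.card_le_of_injective sep hinj
    _ = 4 ^ k := by simp [Fintype.card_set, ← mul_pow]

end ShiftGraph

theorem stmt11_general (b : ℕ) :
    ∃ (n : ℕ) (G : SimpleGraph (Fin n)), ChordalBipartite G ∧ b < boxicity G := by
  let H := shiftBipartiteGraph (Fin (4 ^ b + 1))
  let e : H ≃g H.overFin rfl := H.overFinIso rfl
  refine ⟨_, H.overFin rfl,
    (chordalBipartite_bipartiteOfRel gammaFree_shiftRel).of_embedding e.symm.toEmbedding, ?_⟩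
  by_contra! hle
  have hcard := card_le_of_isBoxRep_shiftBipartiteGraph
    ((isBoxRep_boxicity _).of_embedding e.toEmbedding)
  have := Nat.pow_le_pow_right (by norm_num : 0 < 4) hle
  simp only [Fintype.card_fin] at hcard
  omega

theorem stmt11 (b : ℕ) (hb : 0 < b) :
    ∃ (n : ℕ) (G : SimpleGraph (Fin n)), ChordalBipartite G ∧ b < boxicity G :=
  stmt11_general b
end

section
/- Let T be a tree rooted at r, let k be an odd positive integer, and let u1, u2, x be vertices with d_T(u1,x) ≤ k, d_T(u2,x) ≤ k, d_T(r,u1) ≥ d_T(r,u2), and x a vertex at maximum distance from r. Then for every vertex v with d_T(r,v) ≤ d_T(r,x) and d_T(u1,v) ≤ k, one has d_T(u2,v) ≤ k. -/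
open SimpleGraph Set

section TreeLemmas

variable {V : Type*} {T : SimpleGraph V}

private lemma treePathLen (hT : T.IsTree) {a b : V} {p : T.Walk a b} (hp : p.IsPath) :
    p.length = T.dist a b := by
  obtain ⟨q, hq, hql⟩ := hT.isConnected.exists_path_of_dist a b
  obtain ⟨w0, -, hu⟩ := hT.existsUnique_path a b
  have hpq : p = q := by rw [hu p hp, hu q hq]
  rw [hpq, hql]

private lemma treeSplit (hT : T.IsTree) {a b w : V} {p : T.Walk a b} (hp : p.IsPath)
    (hw : w ∈ p.support) : T.dist a b = T.dist a w + T.dist w b := by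
  classical
  rw [← treePathLen hT hp, ← treePathLen hT (hp.takeUntil hw),
    ← treePathLen hT (hp.dropUntil hw)]
  conv_lhs => rw [← p.take_spec hw]
  rw [SimpleGraph.Walk.length_append]

private lemma pathAppendIsPath {a m b : V} {p : T.Walk a m} {q : T.Walk m b}
    (hp : p.IsPath) (hq : q.IsPath)
    (hint : ∀ w, w ∈ p.support → w ∈ q.support → w = m) : (p.append q).IsPath := by
  rw [SimpleGraph.Walk.isPath_def, SimpleGraph.Walk.support_append]
  have hqt : q.support = m :: q.support.tail := q.support_eq_cons
  have hqn : q.support.Nodup := hq.support_nodup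
  rw [hqt] at hqn
  refine List.Nodup.append hp.support_nodup (List.nodup_cons.mp hqn).2 ?_
  intro w hwp hwt
  have hwq : w ∈ q.support := by rw [hqt]; exact List.mem_cons_of_mem _ hwt
  have := hint w hwp hwq
  subst this
  exact (List.nodup_cons.mp hqn).1 hwt

private lemma existsFirst {c a : V} (W : T.Walk c a) (S : Set V) (ha : a ∈ S) :
    ∃ (m : V) (W1 : T.Walk c m) (W2 : T.Walk m a), W1.append W2 = W ∧ m ∈ S ∧
      ∀ w ∈ W1.support, w ∈ S → w = m := by
  classical
  induction W with
  | nil => exact ⟨_, SimpleGraph.Walk.nil, SimpleGraph.Walk.nil, rfl, ha, by simp⟩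
  | @cons u v d h' W' ih =>
    by_cases hu : u ∈ S
    · exact ⟨u, SimpleGraph.Walk.nil, SimpleGraph.Walk.cons h' W',
        SimpleGraph.Walk.nil_append _, hu, by simp⟩
    · obtain ⟨m, W1, W2, heq, hm, hfirst⟩ := ih ha
      refine ⟨m, SimpleGraph.Walk.cons h' W1, W2, ?_, hm, ?_⟩
      · rw [SimpleGraph.Walk.cons_append, heq]
      · intro w hw hwS
        rw [SimpleGraph.Walk.support_cons, List.mem_cons] at hw
        rcases hw with rfl | hmem
        · exact absurd hwS hu
        · exact hfirst w hmem hwS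

private lemma median (hT : T.IsTree) (a b c : V) :
    ∃ m, T.dist a b = T.dist a m + T.dist m b ∧ T.dist c a = T.dist c m + T.dist m a ∧
      T.dist c b = T.dist c m + T.dist m b := by
  classical
  obtain ⟨P, hP, -⟩ := hT.isConnected.exists_path_of_dist a b
  obtain ⟨Q, hQ, -⟩ := hT.isConnected.exists_path_of_dist c a
  obtain ⟨m, W1, W2, heq, hmP, hfirst⟩ :=
    existsFirst Q {w | w ∈ P.support} P.start_mem_support
  have hW1 : W1.IsPath := SimpleGraph.Walk.IsPath.of_append_left (heq ▸ hQ)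
  have hmQ : m ∈ Q.support := by
    rw [← heq, SimpleGraph.Walk.mem_support_append_iff]
    exact Or.inl W1.end_mem_support
  refine ⟨m, treeSplit hT hP hmP, treeSplit hT hQ hmQ, ?_⟩
  have hdrop := hP.dropUntil hmP
  have hR : (W1.append (P.dropUntil m hmP)).IsPath :=
    pathAppendIsPath hW1 hdrop
      (fun w hw1 hw2 => hfirst w hw1 (P.support_dropUntil_subset hmP hw2))
  have hlen := treePathLen hT hR
  rw [SimpleGraph.Walk.length_append, treePathLen hT hW1, treePathLen hT hdrop] at hlen
  exact hlen.symm

private lemma geodesicMem (hT : T.IsTree) {p b m : V} {P : T.Walk p b} (hP : P.IsPath)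
    (hm : T.dist p m + T.dist m b = T.dist p b) : m ∈ P.support := by
  classical
  obtain ⟨G1, hG1, -⟩ := hT.isConnected.exists_path_of_dist p m
  obtain ⟨G2, hG2, -⟩ := hT.isConnected.exists_path_of_dist m b
  have hint : ∀ w, w ∈ G1.support → w ∈ G2.support → w = m := by
    intro w h1 h2
    have e1 := treeSplit hT hG1 h1
    have e2 := treeSplit hT hG2 h2
    have tri := hT.isConnected.dist_triangle (u := p) (v := w) (w := b)
    have hc : T.dist m w = T.dist w m := SimpleGraph.dist_comm
    have hwm : T.dist w m = 0 := by omega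
    exact (hT.isConnected.dist_eq_zero_iff.mp hwm)
  have hPmb := pathAppendIsPath hG1 hG2 hint
  obtain ⟨w0, -, hu⟩ := hT.existsUnique_path p b
  have heq : G1.append G2 = P := by rw [hu _ hPmb, hu P hP]
  have hms : m ∈ (G1.append G2).support := by
    rw [SimpleGraph.Walk.mem_support_append_iff]
    exact Or.inl G1.end_mem_support
  rwa [heq] at hms

private lemma compar (hT : T.IsTree) {p b m n : V}
    (hm : T.dist p m + T.dist m b = T.dist p b)
    (hn : T.dist p n + T.dist n b = T.dist p b)
    (h : T.dist p m ≤ T.dist p n) : T.dist p n = T.dist p m + T.dist m n := by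
  classical
  obtain ⟨P, hP, -⟩ := hT.isConnected.exists_path_of_dist p b
  have hmP := geodesicMem hT hP hm
  have hnP := geodesicMem hT hP hn
  have hsplit : n ∈ (P.takeUntil m hmP).support ∨ n ∈ (P.dropUntil m hmP).support := by
    rw [← SimpleGraph.Walk.mem_support_append_iff, P.take_spec hmP]
    exact hnP
  have hc : T.dist n m = T.dist m n := SimpleGraph.dist_comm
  rcases hsplit with h1 | h2
  · have e := treeSplit hT (hP.takeUntil hmP) h1
    omega
  · have e := treeSplit hT (hP.dropUntil hmP) h2
    omega

private lemma gromov (hT : T.IsTree) (p a b c : V) :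
    T.dist a c + T.dist p b ≤ T.dist a b + T.dist p c ∨
    T.dist a c + T.dist p b ≤ T.dist b c + T.dist p a := by
  obtain ⟨m1, e1ab, e1pa, e1pb⟩ := median hT a b p
  obtain ⟨m2, e2bc, e2pb, e2pc⟩ := median hT b c p
  have tri1 := hT.isConnected.dist_triangle (u := a) (v := m1) (w := c)
  have tri2 := hT.isConnected.dist_triangle (u := m1) (v := m2) (w := c)
  have c1 : T.dist m1 a = T.dist a m1 := SimpleGraph.dist_comm
  have c2 : T.dist m2 b = T.dist b m2 := SimpleGraph.dist_comm
  have c3 : T.dist m2 c = T.dist c m2 := SimpleGraph.dist_comm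
  rcases le_total (T.dist p m1) (T.dist p m2) with h | h
  · left
    have hc := compar hT (by omega : T.dist p m1 + T.dist m1 b = T.dist p b)
      (by omega : T.dist p m2 + T.dist m2 b = T.dist p b) h
    omega
  · right
    have hc := compar hT (by omega : T.dist p m2 + T.dist m2 b = T.dist p b)
      (by omega : T.dist p m1 + T.dist m1 b = T.dist p b) h
    have c4 : T.dist m2 m1 = T.dist m1 m2 := SimpleGraph.dist_comm
    omega

end TreeLemmas

theorem stmt13 {V : Type*} (T : SimpleGraph V) (hT : T.IsTree) (r x u₁ u₂ v : V)
    (k : ℕ) (hk : Odd k) (hk0 : 0 < k)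
    (h1 : T.dist u₁ x ≤ k) (h2 : T.dist u₂ x ≤ k)
    (h12 : T.dist r u₂ ≤ T.dist r u₁)
    (hfar : ∀ w : V, T.dist r w ≤ T.dist r x)
    (hv : T.dist r v ≤ T.dist r x) (hvu : T.dist u₁ v ≤ k) :
    T.dist u₂ v ≤ k := by
  have I1 := gromov hT r u₂ x v
  have I3 := gromov hT r v u₁ x
  have c1 : T.dist x v = T.dist v x := SimpleGraph.dist_comm
  have c2 : T.dist v u₁ = T.dist u₁ v := SimpleGraph.dist_comm
  rcases I1 with h | h <;> rcases I3 with h' | h' <;> omega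
end

section
/- Let I be an interval graph with representation f in which two disjoint cliques A and B satisfy: all intervals of A contain a common point p_A, all intervals of B contain a common point p_B, and p_A < p_B. If every vertex of a set B' ⊆ B is adjacent in I to every vertex of a set L ⊆ A whose common region is [s,t] with t ≤ p_A, and every vertex of a set A' ⊆ A is adjacent in I to some vertex whose interval lies entirely to the right of t, then all intervals of vertices in A' ∪ B' contain the point t; hence A' ∪ B' is a clique in I. -/
open SimpleGraph Set

theorem stmt17 {V : Type*} [Fintype V] (I : SimpleGraph V) (a b : V → ℝ)
    (hrep : IsIntervalRep I a b) (A B : Set V) (hdisj : Disjoint A B)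
    (hA : I.IsClique A) (hB : I.IsClique B)
    (pA pB : ℝ) (hpApB : pA < pB)
    (hpA : ∀ u ∈ A, pA ∈ Set.Icc (a u) (b u))
    (hpB : ∀ u ∈ B, pB ∈ Set.Icc (a u) (b u))
    (B' : Set V) (hB' : B' ⊆ B) (L : Set V) (hL : L ⊆ A)
    (s t : ℝ) (hst : (⋂ u ∈ L, Set.Icc (a u) (b u)) = Set.Icc s t) (ht : t ≤ pA)
    (hBL : ∀ u ∈ B', ∀ w ∈ L, I.Adj u w)
    (A' : Set V) (hA' : A' ⊆ A)
    (hAright : ∀ u ∈ A', ∃ w : V, I.Adj u w ∧ t < a w) :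
    (∀ u ∈ A' ∪ B', t ∈ Set.Icc (a u) (b u)) ∧ I.IsClique (A' ∪ B') := by
  obtain ⟨hab, hadj⟩ := hrep
  have hpAmem : pA ∈ Set.Icc s t := by
    rw [← hst]
    exact Set.mem_iInter₂.2 fun w hw => hpA w (hL hw)
  have hstle : s ≤ t := hpAmem.1.trans hpAmem.2
  have htpA : t = pA := le_antisymm ht hpAmem.2
  have key : ∀ u ∈ A' ∪ B', t ∈ Set.Icc (a u) (b u) := by
    intro u hu
    cases hu with
    | inl h => rw [htpA]; exact hpA u (hA' h)
    | inr h =>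
      constructor
      · have hm : max (a u) s ∈ Set.Icc s t := by
          rw [← hst]
          refine Set.mem_iInter₂.2 fun w hw => ?_
          have hs : s ∈ Set.Icc (a w) (b w) := by
            have hsm : s ∈ Set.Icc s t := ⟨le_refl s, hstle⟩
            rw [← hst] at hsm
            exact Set.mem_iInter₂.1 hsm w hw
          obtain ⟨x, hx1, hx2⟩ := ((hadj u w).1 (hBL u h w hw)).2
          exact ⟨le_max_of_le_right hs.1, max_le (hx1.1.trans hx2.2) hs.2⟩
        exact (le_max_left _ _).trans hm.2
      · rw [htpA]
        exact le_trans hpApB.le (hpB u (hB' h)).2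
  refine ⟨key, ?_⟩
  intro u hu v hv huv
  rw [hadj]
  exact ⟨huv, t, key u hu, key v hv⟩
end
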